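/- Let Q be a symmetric n×n real matrix, d ∈ ℝⁿ, A ∈ ℝ^{m×n} with m ≥ n and with A_{1:n} (the first n rows) invertible, and b ∈ ℝᵐ. Let 1 ≤ k ≤ n, let x̄ ∈ ℝⁿ satisfy A_{1:k}x̄ = b_{1:k}, and let λ̄ ∈ ℝ^k satisfy Qx̄ + d = −Σ_{i=1}^{k} λ̄_i a_i, where a_i is the transpose of the i-th row of A. Define R := (A_{1:n}^{-1})ᵀ Q A_{1:n}^{-1}, p := −(A_{1:n}^{-1})ᵀ d − (A_{1:n}^{-1})ᵀ Q A_{1:n}^{-1} b_{1:n}, and r := (Q A_{1:n}^{-1} b_{1:n} + 2d)ᵀ A_{1:n}^{-1} b_{1:n}. If k < n, partition R = [R₁₁, R₁₂; R₁₂ᵀ, R₂₂] and p = (p₁; p₂) with blocks of sizes k and n−k, and assume R₂₂ is invertible; define q := (p₁ − R₁₂R₂₂^{-1}p₂; 0) ∈ ℝⁿ and υ := r − p₂ᵀR₂₂^{-1}p₂; if k = n set q := p and υ := r. Then q_i = λ̄_i for i = 1,…,k, q_i = 0 for i > k, and υ = Φ(x̄) = x̄ᵀQx̄ + 2dᵀx̄.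 -/

import Mathlib

/-!
In the coordinates `y = b_{1:n} − A_{1:n} x` the objective becomes
`Φ = yᵀ R y + 2 pᵀ y + r`, whose gradient `p + R y` at `ȳ` equals `A_{1:n}⁻ᵀ(−(Q x̄ + d))`,
i.e. the multiplier vector `λ̄` padded by zeros, `λ̃`. Since `ȳ` vanishes on the first `k`
coordinates, the last `n − k` rows of this identity read `R₂₂ ȳ₂ = −p₂`, so `ȳ₂ = −R₂₂⁻¹ p₂`;
substituting into the first `k` rows gives `q₁ = λ̄`. Finally `ȳᵀ(R ȳ + p) = ȳᵀ λ̃ = 0` because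
the supports are disjoint, so `Φ(x̄) = r + pᵀ ȳ = r − p₂ᵀ R₂₂⁻¹ p₂ = υ`.
-/

open Matrix

/-- Embedding of the first `k` indices into `Fin n`. -/
def low {n k : ℕ} (hkn : k ≤ n) : Fin k → Fin n := Fin.castLE hkn

/-- Embedding of the last `n − k` indices into `Fin n`. -/
def high {n k : ℕ} (hkn : k ≤ n) : Fin (n - k) → Fin n :=
  fun i => ⟨k + (i : ℕ), by have := i.2; omega⟩

/-- The submatrix `A_{1:n}` of the first `n` rows of `A`. -/
def An {n m : ℕ} (hmn : n ≤ m) (A : Matrix (Fin m) (Fin n) ℝ) :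
    Matrix (Fin n) (Fin n) ℝ :=
  A.submatrix (Fin.castLE hmn) id

/-- The subvector `b_{1:n}`. -/
def bn {n m : ℕ} (hmn : n ≤ m) (b : Fin m → ℝ) : Fin n → ℝ :=
  fun i => b (Fin.castLE hmn i)

/-- `R := (A_{1:n}⁻¹)ᵀ Q A_{1:n}⁻¹`. -/
noncomputable def Rmat {n m : ℕ} (hmn : n ≤ m) (Q : Matrix (Fin n) (Fin n) ℝ)
    (A : Matrix (Fin m) (Fin n) ℝ) : Matrix (Fin n) (Fin n) ℝ :=
  ((An hmn A)⁻¹)ᵀ * Q * (An hmn A)⁻¹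

/-- `p := −(A_{1:n}⁻¹)ᵀ d − (A_{1:n}⁻¹)ᵀ Q A_{1:n}⁻¹ b_{1:n}`. -/
noncomputable def pVec {n m : ℕ} (hmn : n ≤ m) (Q : Matrix (Fin n) (Fin n) ℝ)
    (d : Fin n → ℝ) (A : Matrix (Fin m) (Fin n) ℝ) (b : Fin m → ℝ) : Fin n → ℝ :=
  -(((An hmn A)⁻¹)ᵀ *ᵥ d) - (((An hmn A)⁻¹)ᵀ * Q * (An hmn A)⁻¹) *ᵥ bn hmn b

/-- `r := (Q A_{1:n}⁻¹ b_{1:n} + 2d)ᵀ A_{1:n}⁻¹ b_{1:n}`. -/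
noncomputable def rVal {n m : ℕ} (hmn : n ≤ m) (Q : Matrix (Fin n) (Fin n) ℝ)
    (d : Fin n → ℝ) (A : Matrix (Fin m) (Fin n) ℝ) (b : Fin m → ℝ) : ℝ :=
  (Q *ᵥ ((An hmn A)⁻¹ *ᵥ bn hmn b) + (2 : ℝ) • d) ⬝ᵥ ((An hmn A)⁻¹ *ᵥ bn hmn b)

/-- `q := (p₁ − R₁₂R₂₂⁻¹p₂; 0)` (which reduces to `q = p` when `k = n`, since then
the second block is empty). -/
noncomputable def qVec {n m k : ℕ} (hmn : n ≤ m) (hkn : k ≤ n)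
    (Q : Matrix (Fin n) (Fin n) ℝ) (d : Fin n → ℝ)
    (A : Matrix (Fin m) (Fin n) ℝ) (b : Fin m → ℝ) : Fin n → ℝ :=
  fun j =>
    if hj : (j : ℕ) < k then
      (pVec hmn Q d A b ∘ low hkn -
        (Rmat hmn Q A).submatrix (low hkn) (high hkn) *ᵥ
          (((Rmat hmn Q A).submatrix (high hkn) (high hkn))⁻¹ *ᵥ
            (pVec hmn Q d A b ∘ high hkn))) ⟨(j : ℕ), hj⟩
    else 0

/-- `υ := r − p₂ᵀR₂₂⁻¹p₂` (which reduces to `υ = r` when `k = n`). -/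
noncomputable def upsilonVal {n m k : ℕ} (hmn : n ≤ m) (hkn : k ≤ n)
    (Q : Matrix (Fin n) (Fin n) ℝ) (d : Fin n → ℝ)
    (A : Matrix (Fin m) (Fin n) ℝ) (b : Fin m → ℝ) : ℝ :=
  rVal hmn Q d A b -
    (pVec hmn Q d A b ∘ high hkn) ⬝ᵥ
      (((Rmat hmn Q A).submatrix (high hkn) (high hkn))⁻¹ *ᵥ
        (pVec hmn Q d A b ∘ high hkn))

section Blocks

variable {n k : ℕ} (hkn : k ≤ n)

theorem sum_low_add_sum_high {M : Type*} [AddCommMonoid M] (f : Fin n → M) :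
    ∑ j, f j = ∑ i : Fin k, f (low hkn i) + ∑ i : Fin (n - k), f (high hkn i) := by
  let e : Fin k ⊕ Fin (n - k) ≃ Fin n := finSumFinEquiv.trans (finCongr (by omega))
  rw [← e.sum_comp f, Fintype.sum_sum_type]
  rfl

theorem low_injective : Function.Injective (low hkn) := Fin.castLE_injective hkn

theorem low_ne_high (i : Fin k) (j : Fin (n - k)) : low hkn i ≠ high hkn j := by
  simp only [low, high, ne_eq, Fin.ext_iff, Fin.val_castLE]
  omega

variable {α : Type*} [CommRing α]

theorem dotProduct_eq_comp_high_of_comp_low_eq_zero {y : Fin n → α}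
    (hy : y ∘ low hkn = 0) (v : Fin n → α) : v ⬝ᵥ y = (v ∘ high hkn) ⬝ᵥ (y ∘ high hkn) := by
  rw [dotProduct, sum_low_add_sum_high hkn]
  simp [show ∀ i, y (low hkn i) = 0 from congrFun hy, dotProduct]

theorem mulVec_eq_submatrix_high_of_comp_low_eq_zero {ι : Type*} {y : Fin n → α}
    (hy : y ∘ low hkn = 0) (M : Matrix ι (Fin n) α) :
    M *ᵥ y = M.submatrix id (high hkn) *ᵥ (y ∘ high hkn) :=
  funext fun i => dotProduct_eq_comp_high_of_comp_low_eq_zero hkn hy (M i)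

variable {R : Matrix (Fin n) (Fin n) α} {p y : Fin n → α}

theorem inv_mulVec_comp_high_eq_neg (hy : y ∘ low hkn = 0)
    (hg : (p + R *ᵥ y) ∘ high hkn = 0)
    (hR : IsUnit (R.submatrix (high hkn) (high hkn)).det) :
    (R.submatrix (high hkn) (high hkn))⁻¹ *ᵥ (p ∘ high hkn) = -(y ∘ high hkn) := by
  have hp : p ∘ high hkn = -(R.submatrix (high hkn) (high hkn) *ᵥ (y ∘ high hkn)) := by
    rw [eq_neg_iff_add_eq_zero, ← hg, Pi.add_comp,
      mulVec_eq_submatrix_high_of_comp_low_eq_zero hkn hy]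
    rfl
  rw [hp, mulVec_neg, mulVec_mulVec, nonsing_inv_mul _ hR, one_mulVec]

theorem comp_low_sub_submatrix_mulVec_inv_mulVec (hy : y ∘ low hkn = 0)
    (hg : (p + R *ᵥ y) ∘ high hkn = 0)
    (hR : IsUnit (R.submatrix (high hkn) (high hkn)).det) :
    p ∘ low hkn - R.submatrix (low hkn) (high hkn) *ᵥ
        ((R.submatrix (high hkn) (high hkn))⁻¹ *ᵥ (p ∘ high hkn)) =
      (p + R *ᵥ y) ∘ low hkn := by
  rw [inv_mulVec_comp_high_eq_neg hkn hy hg hR, mulVec_neg, sub_neg_eq_add, Pi.add_comp,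
    mulVec_eq_submatrix_high_of_comp_low_eq_zero hkn hy]
  rfl

theorem comp_high_dotProduct_inv_mulVec (hy : y ∘ low hkn = 0)
    (hg : (p + R *ᵥ y) ∘ high hkn = 0)
    (hR : IsUnit (R.submatrix (high hkn) (high hkn)).det) :
    (p ∘ high hkn) ⬝ᵥ ((R.submatrix (high hkn) (high hkn))⁻¹ *ᵥ (p ∘ high hkn)) =
      -(p ⬝ᵥ y) := by
  rw [inv_mulVec_comp_high_eq_neg hkn hy hg hR, dotProduct_neg,
    dotProduct_eq_comp_high_of_comp_low_eq_zero hkn hy]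

theorem dotProduct_add_mulVec_eq_zero (hy : y ∘ low hkn = 0)
    (hg : (p + R *ᵥ y) ∘ high hkn = 0) : y ⬝ᵥ (p + R *ᵥ y) = 0 := by
  rw [dotProduct_comm, dotProduct_eq_comp_high_of_comp_low_eq_zero hkn hy, hg, zero_dotProduct]

end Blocks

theorem Matrix.IsSymm.dotProduct_mulVec_comm {α ι : Type*} [CommSemiring α] [Fintype ι]
    {M : Matrix ι ι α} (hM : M.IsSymm) (v w : ι → α) : v ⬝ᵥ (M *ᵥ w) = w ⬝ᵥ (M *ᵥ v) := by
  nth_rw 1 [← hM.eq]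
  exact dotProduct_transpose_mulVec M v w

section ChangeOfCoordinates

variable {n m : ℕ} (hmn : n ≤ m) (Q : Matrix (Fin n) (Fin n) ℝ) (d : Fin n → ℝ)
  {A : Matrix (Fin m) (Fin n) ℝ} (b : Fin m → ℝ)

theorem bn_sub_An_mulVec_comp_low {k : ℕ} (hkn : k ≤ n) {x : Fin n → ℝ}
    (hact : ∀ i : Fin m, (i : ℕ) < k → (A *ᵥ x) i = b i) :
    (bn hmn b - An hmn A *ᵥ x) ∘ low hkn = 0 :=
  funext fun i => sub_eq_zero.mpr (hact _ i.2).symm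

theorem sum_smul_rows_eq_transpose_mulVec_extend {k : ℕ} (hkn : k ≤ n) (lam : Fin k → ℝ) :
    ∑ i : Fin k, lam i • A (Fin.castLE (hkn.trans hmn) i) =
      (An hmn A)ᵀ *ᵥ Function.extend (low hkn) lam 0 := by
  ext j
  simp only [Finset.sum_apply, Pi.smul_apply, smul_eq_mul, mulVec, dotProduct]
  refine Fintype.sum_of_injective (low hkn) (low_injective hkn) _ _ (fun i hi => ?_) fun i => ?_
  · rw [Function.extend_apply' _ _ _ hi, Pi.zero_apply, mul_zero]
  · rw [(low_injective hkn).extend_apply, mul_comm]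
    rfl

variable (hinv : IsUnit (An hmn A).det)
include hinv

theorem pVec_add_Rmat_mulVec (x : Fin n → ℝ) :
    pVec hmn Q d A b + Rmat hmn Q A *ᵥ (bn hmn b - An hmn A *ᵥ x) =
      -((An hmn A)⁻¹ᵀ *ᵥ (Q *ᵥ x + d)) := by
  have hx : (An hmn A)⁻¹ *ᵥ (An hmn A *ᵥ x) = x := by
    rw [mulVec_mulVec, nonsing_inv_mul _ hinv, one_mulVec]
  simp only [pVec, Rmat, mulVec_sub, ← mulVec_mulVec, hx, mulVec_add]
  abel

theorem quadratic_eq_Rmat_pVec_rVal (hQ : Q.IsSymm) {x y : Fin n → ℝ}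
    (hy : y = bn hmn b - An hmn A *ᵥ x) :
    x ⬝ᵥ (Q *ᵥ x) + 2 * (d ⬝ᵥ x) =
      y ⬝ᵥ (Rmat hmn Q A *ᵥ y) + 2 * (pVec hmn Q d A b ⬝ᵥ y) + rVal hmn Q d A b := by
  set c := (An hmn A)⁻¹ *ᵥ bn hmn b
  set u := (An hmn A)⁻¹ *ᵥ y
  have hx : x = c - u := by
    simp only [u, hy, c, mulVec_sub, mulVec_mulVec, nonsing_inv_mul _ hinv, one_mulVec]
    abel
  have hRy : Rmat hmn Q A *ᵥ y = (An hmn A)⁻¹ᵀ *ᵥ (Q *ᵥ u) := by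
    simp only [Rmat, u, mulVec_mulVec, Matrix.mul_assoc]
  have hp : pVec hmn Q d A b = -((An hmn A)⁻¹ᵀ *ᵥ (d + Q *ᵥ c)) := by
    simp only [pVec, c, mulVec_add, mulVec_mulVec, Matrix.mul_assoc]
    abel
  have hr : rVal hmn Q d A b = (Q *ᵥ c) ⬝ᵥ c + 2 * (d ⬝ᵥ c) := by
    simp only [rVal, add_dotProduct, smul_dotProduct, smul_eq_mul]
    rfl
  have horth : y ⬝ᵥ ((An hmn A)⁻¹ᵀ *ᵥ (Q *ᵥ u)) = (Q *ᵥ u) ⬝ᵥ u :=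
    dotProduct_transpose_mulVec _ _ _
  have hpy : ((An hmn A)⁻¹ᵀ *ᵥ (d + Q *ᵥ c)) ⬝ᵥ y = (d + Q *ᵥ c) ⬝ᵥ u := by
    rw [dotProduct_comm]
    exact dotProduct_transpose_mulVec _ _ _
  rw [hRy, hp, hr, neg_dotProduct, horth, hpy, hx]
  simp only [mulVec_sub, dotProduct_sub, sub_dotProduct, add_dotProduct]
  rw [dotProduct_comm (Q *ᵥ u), dotProduct_comm (Q *ᵥ c), dotProduct_comm (Q *ᵥ c),
    hQ.dotProduct_mulVec_comm c u]
  ring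

end ChangeOfCoordinates

theorem qVec_eq_lambda_and_upsilon_eq_Phi_general {n m k : ℕ}
    (hmn : n ≤ m) (hkn : k ≤ n)
    (Q : Matrix (Fin n) (Fin n) ℝ) (hQ : Q.IsSymm)
    (d : Fin n → ℝ) (A : Matrix (Fin m) (Fin n) ℝ) (b : Fin m → ℝ)
    (hinv : IsUnit (An hmn A).det)
    (xbar : Fin n → ℝ)
    (hact : ∀ i : Fin m, (i : ℕ) < k → (A *ᵥ xbar) i = b i)
    (lam : Fin k → ℝ)
    (hstat : Q *ᵥ xbar + d = -(∑ i : Fin k, lam i • A (Fin.castLE (hkn.trans hmn) i)))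
    (hR22 : IsUnit ((Rmat hmn Q A).submatrix (high hkn) (high hkn)).det) :
    (∀ i : Fin k, qVec hmn hkn Q d A b (low hkn i) = lam i) ∧
    (∀ j : Fin n, k ≤ (j : ℕ) → qVec hmn hkn Q d A b j = 0) ∧
    upsilonVal hmn hkn Q d A b = xbar ⬝ᵥ (Q *ᵥ xbar) + 2 * (d ⬝ᵥ xbar) := by
  set y := bn hmn b - An hmn A *ᵥ xbar
  set lam' := Function.extend (low hkn) lam 0
  have hy : y ∘ low hkn = 0 := bn_sub_An_mulVec_comp_low hmn b hkn hact
  have hgrad : pVec hmn Q d A b + Rmat hmn Q A *ᵥ y = lam' := by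
    rw [pVec_add_Rmat_mulVec hmn Q d b hinv, hstat, sum_smul_rows_eq_transpose_mulVec_extend hmn,
      mulVec_neg, neg_neg, mulVec_mulVec, ← transpose_mul, mul_nonsing_inv _ hinv,
      transpose_one, one_mulVec]
  have hlam'_high : lam' ∘ high hkn = 0 :=
    funext fun j => Function.extend_apply' _ _ _ fun ⟨i, hi⟩ => low_ne_high hkn i j hi
  have hg : (pVec hmn Q d A b + Rmat hmn Q A *ᵥ y) ∘ high hkn = 0 := hgrad ▸ hlam'_high
  refine ⟨fun i => ?_, fun j hj => dif_neg (by omega), ?_⟩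
  · unfold qVec
    rw [dif_pos (show (low hkn i : ℕ) < k from i.2)]
    exact (congrFun (comp_low_sub_submatrix_mulVec_inv_mulVec hkn hy hg hR22) i).trans
      (by rw [hgrad]; exact (low_injective hkn).extend_apply lam 0 i)
  · have horth := dotProduct_add_mulVec_eq_zero hkn hy hg
    rw [dotProduct_add, dotProduct_comm] at horth
    rw [upsilonVal, comp_high_dotProduct_inv_mulVec hkn hy hg hR22,
      quadratic_eq_Rmat_pVec_rVal hmn Q d b hinv hQ rfl]
    linear_combination -horth

/-- Lemma `l:q=lambda`. At a point `x̄` with `A_{1:k}x̄ = b_{1:k}`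
and `Qx̄ + d = −Σ_{i≤k} λ̄_i a_i`, the data `(q, υ)` obtained after the change of
coordinates `y = b_{1:n} − A_{1:n}x` satisfy `q_i = λ̄_i` for `i ≤ k`, `q_i = 0` for
`i > k`, and `υ = Φ(x̄)`. -/
theorem qVec_eq_lambda_and_upsilon_eq_Phi {n m k : ℕ}
    (hmn : n ≤ m) (hk1 : 1 ≤ k) (hkn : k ≤ n)
    (Q : Matrix (Fin n) (Fin n) ℝ) (hQ : Q.IsSymm)
    (d : Fin n → ℝ) (A : Matrix (Fin m) (Fin n) ℝ) (b : Fin m → ℝ)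
    (hinv : IsUnit (An hmn A).det)
    (xbar : Fin n → ℝ)
    (hact : ∀ i : Fin m, (i : ℕ) < k → (A *ᵥ xbar) i = b i)
    (lam : Fin k → ℝ)
    (hstat : Q *ᵥ xbar + d = -(∑ i : Fin k, lam i • A (Fin.castLE (hkn.trans hmn) i)))
    (hR22 : IsUnit ((Rmat hmn Q A).submatrix (high hkn) (high hkn)).det) :
    (∀ i : Fin k, qVec hmn hkn Q d A b (low hkn i) = lam i) ∧
    (∀ j : Fin n, k ≤ (j : ℕ) → qVec hmn hkn Q d A b j = 0) ∧
    upsilonVal hmn hkn Q d A b = xbar ⬝ᵥ (Q *ᵥ xbar) + 2 * (d ⬝ᵥ xbar) :=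
  qVec_eq_lambda_and_upsilon_eq_Phi_general hmn hkn Q hQ d A b hinv xbar hact lam hstat hR22
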